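/- arXiv:2503.09909 — 6 statements merged into one kernel-verified Lean document; each statement's English description precedes it below -/
import Mathlib

section
/- Let n ≥ 1 and ℓ ≥ 1. Let c : ℕ → ℝ be a sequence with every c_k ∈ ℤ[X_{n-1}] and c_{k+ℓ} = c_k for all k ≥ 1, and suppose the continued fraction [c₀, c₁, c₂, …] converges to X_n. Then the convergents satisfy p_{ℓ−1}² − X_n²·q_{ℓ−1}² = (−1)^ℓ. -/
/-- `X n = 2 cos(2π/2^(n+2))`. -/
noncomputable def X (n : ℕ) : ℝ := 2 * Real.cos (2 * Real.pi / 2 ^ (n + 2))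

/-- Convergent numerators: `cfNum c (k+1) = p_k`, with `cfNum c 0 = p_{-1} = 1`. -/
noncomputable def cfNum (c : ℕ → ℝ) : ℕ → ℝ
  | 0 => 1
  | 1 => c 0
  | (k + 2) => c (k + 1) * cfNum c (k + 1) + cfNum c k

/-- Convergent denominators: `cfDen c (k+1) = q_k`, with `cfDen c 0 = q_{-1} = 0`. -/
noncomputable def cfDen (c : ℕ → ℝ) : ℕ → ℝ
  | 0 => 0
  | 1 => 1
  | (k + 2) => c (k + 1) * cfDen c (k + 1) + cfDen c k

/-- The continued fraction `[c₀, c₁, c₂, …]` converges to `x`. -/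
def CFConv (c : ℕ → ℝ) (x : ℝ) : Prop :=
  Filter.Tendsto (fun k => cfNum c (k + 1) / cfDen c (k + 1)) Filter.atTop (nhds x)

/-!
Write `p, q` for `p_{ℓ-1}, q_{ℓ-1}` and `p', q'` for `p_ℓ, q_ℓ`. By periodicity the
convergents `p_{ℓ-1+m}, q_{ℓ-1+m}` are fixed linear combinations of `p_{m-1}, q_{m-1}`, so in
the limit `x = X_n` is a fixed point of a Möbius map:
`q x² + (q' - c₀ q - p) x - (p' - c₀ p) = 0`, with coefficients in `ℚ(X_{n-1})`.
As `[ℚ(X_m) : ℚ] = 2^m` (at most `2^m` since `X_{m+1}² = 2 + X_m`, at least `2^m` since the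
primitive `2^{m+2}`-th root of unity is quadratic over `ℚ(X_m)`), `X_n ∉ ℚ(X_{n-1})`.
Replacing `x²` by `2 + X_{n-1}` and comparing coefficients of `1, x` gives `p' - c₀ p = x² q`
and `q' - c₀ q = p`, which turn the determinant identity `p' q - p q' = (-1)^(ℓ+1)` into the
claim.
-/

open IntermediateField Module

theorem IntermediateField.finrank_adjoin_simple_le_two_mul {K E : Type*} [Field K] [Field E]
    [Algebra K E] (F : IntermediateField K E) [FiniteDimensional K F] {x a b : E}
    (ha : a ∈ F) (hb : b ∈ F) (hx : x ^ 2 = a * x + b) :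
    finrank K K⟮x⟯ ≤ 2 * finrank K F := by
  let p : Polynomial F := Polynomial.X ^ 2 - Polynomial.C ⟨a, ha⟩ * Polynomial.X
    - Polynomial.C ⟨b, hb⟩
  have hp_natDegree : p.natDegree = 2 := by unfold p; compute_degree!
  have hp_monic : p.Monic := by unfold p; monicity!
  have hp_root : Polynomial.aeval x p = 0 := by
    simp only [p, map_sub, map_mul, map_pow, Polynomial.aeval_X, Polynomial.aeval_C,
      IntermediateField.algebraMap_apply, hx]
    ring
  have hx_int : IsIntegral F x := ⟨p, hp_monic, hp_root⟩
  have hdeg : finrank F F⟮x⟯ ≤ 2 := by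
    rw [adjoin.finrank hx_int, ← hp_natDegree]
    exact Polynomial.natDegree_le_natDegree (minpoly.min F x hp_monic hp_root)
  have : FiniteDimensional F F⟮x⟯ := adjoin.finiteDimensional hx_int
  have : FiniteDimensional K (F⟮x⟯.restrictScalars K) := FiniteDimensional.trans K F F⟮x⟯
  have : Module.Free F F⟮x⟯ := Module.Free.of_divisionRing F _
  calc finrank K K⟮x⟯ ≤ finrank K (F⟮x⟯.restrictScalars K) :=
        finrank_le_of_le_right (adjoin_simple_le_iff.2 (mem_adjoin_simple_self F x))
    _ = finrank K F * finrank F F⟮x⟯ := (finrank_mul_finrank K F F⟮x⟯).symm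
    _ ≤ 2 * finrank K F := by rw [mul_comm]; exact Nat.mul_le_mul_right _ hdeg

theorem mem_adjoin_simple_of_mem_adjoin_int {E : Type*} [Field E] [CharZero E] {x y : E}
    (hy : y ∈ Algebra.adjoin ℤ {x}) : y ∈ ℚ⟮x⟯ :=
  Algebra.adjoin_le (S := ℚ⟮x⟯.toSubalgebra.restrictScalars ℤ)
    (Set.singleton_subset_iff.2 (mem_adjoin_simple_self ℚ x)) hy

theorem cfNum_add_two (c : ℕ → ℝ) (k : ℕ) :
    cfNum c (k + 2) = c (k + 1) * cfNum c (k + 1) + cfNum c k := rfl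

theorem cfDen_add_two (c : ℕ → ℝ) (k : ℕ) :
    cfDen c (k + 2) = c (k + 1) * cfDen c (k + 1) + cfDen c k := rfl

theorem cfNum_mul_cfDen_sub (c : ℕ → ℝ) (k : ℕ) :
    cfNum c (k + 1) * cfDen c k - cfNum c k * cfDen c (k + 1) = (-1) ^ (k + 1) := by
  induction k with
  | zero => simp [cfNum, cfDen]
  | succ k ih =>
    rw [cfNum_add_two, cfDen_add_two, pow_succ]
    linear_combination -ih

theorem cfNum_mem_and_cfDen_mem {S : Type*} [SetLike S ℝ] [SubsemiringClass S ℝ] {s : S}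
    {c : ℕ → ℝ} (hc : ∀ k, c k ∈ s) (k : ℕ) : cfNum c k ∈ s ∧ cfDen c k ∈ s := by
  induction k using Nat.twoStepInduction with
  | zero => exact ⟨one_mem s, zero_mem s⟩
  | one => exact ⟨hc 0, one_mem s⟩
  | more k ih₀ ih₁ =>
    rw [cfNum_add_two, cfDen_add_two]
    exact ⟨add_mem (mul_mem (hc _) ih₁.1) ih₀.1, add_mem (mul_mem (hc _) ih₁.2) ih₀.2⟩

theorem eq_of_cf_recurrence {c u : ℕ → ℝ} (hu : ∀ m, u (m + 2) = c (m + 1) * u (m + 1) + u m)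
    (m : ℕ) : u m = u 0 * cfNum c m + (u 1 - c 0 * u 0) * cfDen c m := by
  induction m using Nat.twoStepInduction with
  | zero => simp [cfNum, cfDen]
  | one => simp only [cfNum, cfDen]; ring
  | more m ih₀ ih₁ =>
    rw [hu, cfNum_add_two, cfDen_add_two, ih₀, ih₁]
    ring

section Periodic

variable {c : ℕ → ℝ} {ℓ : ℕ}

theorem apply_add_succ_of_periodic (hper : ∀ k, 1 ≤ k → c (k + ℓ) = c k) (m : ℕ) :
    c (ℓ + m + 1) = c (m + 1) := by
  rw [add_assoc, add_comm]
  exact hper _ (by omega)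

theorem cfNum_add_of_periodic (hper : ∀ k, 1 ≤ k → c (k + ℓ) = c k) (m : ℕ) :
    cfNum c (ℓ + m) = cfNum c ℓ * cfNum c m + (cfNum c (ℓ + 1) - c 0 * cfNum c ℓ) * cfDen c m :=
  eq_of_cf_recurrence (u := fun m => cfNum c (ℓ + m))
    (fun m => by rw [← add_assoc, cfNum_add_two, apply_add_succ_of_periodic hper]; rfl) m

theorem cfDen_add_of_periodic (hper : ∀ k, 1 ≤ k → c (k + ℓ) = c k) (m : ℕ) :
    cfDen c (ℓ + m) = cfDen c ℓ * cfNum c m + (cfDen c (ℓ + 1) - c 0 * cfDen c ℓ) * cfDen c m :=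
  eq_of_cf_recurrence (u := fun m => cfDen c (ℓ + m))
    (fun m => by rw [← add_assoc, cfDen_add_two, apply_add_succ_of_periodic hper]; rfl) m

open Filter Topology in
theorem CFConv.quadratic_of_periodic {x : ℝ} (hconv : CFConv c x) (hx : x ≠ 0)
    (hper : ∀ k, 1 ≤ k → c (k + ℓ) = c k) :
    x * (cfDen c ℓ * x + (cfDen c (ℓ + 1) - c 0 * cfDen c ℓ))
      = cfNum c ℓ * x + (cfNum c (ℓ + 1) - c 0 * cfNum c ℓ) := by
  set r : ℕ → ℝ := fun k => cfNum c k / cfDen c k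
  have hr : Tendsto r atTop (𝓝 x) := (tendsto_add_atTop_iff_nat 1).1 hconv
  have hshift : Tendsto (ℓ + ·) atTop atTop :=
    tendsto_atTop_mono (fun m => Nat.le_add_left m ℓ) tendsto_id
  have hr_shift : Tendsto (fun m => r (ℓ + m)) atTop (𝓝 x) := hr.comp hshift
  -- `p / 0 = 0`, so `r m → x ≠ 0` is what makes the denominators eventually nonzero.
  have hden : ∀ᶠ m in atTop, cfDen c m ≠ 0 :=
    (hr.eventually_ne hx).mono fun m hm hq => hm (by simp [r, hq])
  have hmoebius : ∀ᶠ m in atTop,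
      r (ℓ + m) * (cfDen c ℓ * r m + (cfDen c (ℓ + 1) - c 0 * cfDen c ℓ))
        = cfNum c ℓ * r m + (cfNum c (ℓ + 1) - c 0 * cfNum c ℓ) := by
    filter_upwards [hden, hshift.eventually hden] with m hq hq_shift
    simp only [r]
    rw [cfDen_add_of_periodic hper] at hq_shift ⊢
    rw [cfNum_add_of_periodic hper, div_mul_eq_mul_div, div_eq_iff hq_shift]
    field_simp
  refine tendsto_nhds_unique (Tendsto.congr' hmoebius ?_) ?_
  · exact hr_shift.mul ((tendsto_const_nhds.mul hr).add tendsto_const_nhds)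
  · exact (tendsto_const_nhds.mul hr).add tendsto_const_nhds

end Periodic

theorem X_zero : X 0 = 0 := by
  simp [X, show 2 * Real.pi / 2 ^ 2 = Real.pi / 2 by ring]

theorem X_succ_sq (m : ℕ) : X (m + 1) ^ 2 = 2 + X m := by
  rw [X, X, show 2 * Real.pi / 2 ^ (m + 2) = 2 * (2 * Real.pi / 2 ^ (m + 1 + 2)) by ring,
    Real.cos_two_mul]
  ring

theorem X_pos (m : ℕ) : 0 < X (m + 1) := by
  have hangle : 2 * Real.pi / 2 ^ (m + 1 + 2) ≤ Real.pi / 4 := by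
    rw [div_le_div_iff₀ (by positivity) (by positivity),
      show (2 : ℝ) ^ (m + 1 + 2) = 2 ^ m * 8 by ring]
    have : (1 : ℝ) ≤ 2 ^ m := one_le_pow₀ one_le_two
    nlinarith [Real.pi_pos]
  unfold X
  have := Real.cos_pos_of_mem_Ioo (x := 2 * Real.pi / 2 ^ (m + 1 + 2))
    ⟨by linarith [Real.pi_pos, show 0 < 2 * Real.pi / 2 ^ (m + 1 + 2) by positivity],
      by linarith [Real.pi_pos]⟩
  positivity

theorem isIntegral_X (m : ℕ) : IsIntegral ℚ (X m) := by
  induction m with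
  | zero => rw [X_zero]; exact isIntegral_zero
  | succ m ih =>
    refine IsIntegral.of_pow two_pos ?_
    rw [X_succ_sq]
    simpa using (isIntegral_algebraMap (x := (2 : ℚ)) (A := ℝ)).add ih

theorem finrank_adjoin_X_le (m : ℕ) : finrank ℚ ℚ⟮X m⟯ ≤ 2 ^ m := by
  induction m with
  | zero => rw [X_zero, adjoin_zero, IntermediateField.finrank_bot, pow_zero]
  | succ m ih =>
    have : FiniteDimensional ℚ ℚ⟮X m⟯ := adjoin.finiteDimensional (isIntegral_X m)
    have h2 : (2 : ℝ) + X m ∈ ℚ⟮X m⟯ := add_mem (ofNat_mem _ 2) (mem_adjoin_simple_self ℚ _)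
    calc finrank ℚ ℚ⟮X (m + 1)⟯ ≤ 2 * finrank ℚ ℚ⟮X m⟯ :=
          ℚ⟮X m⟯.finrank_adjoin_simple_le_two_mul (zero_mem _) h2 (by rw [X_succ_sq]; ring)
      _ ≤ 2 ^ (m + 1) := by rw [pow_succ']; exact Nat.mul_le_mul_left 2 ih

noncomputable def zeta (m : ℕ) : ℂ := Complex.exp (2 * Real.pi * Complex.I / (2 ^ (m + 2) : ℕ))

theorem isPrimitiveRoot_zeta (m : ℕ) : IsPrimitiveRoot (zeta m) (2 ^ (m + 2)) :=
  Complex.isPrimitiveRoot_exp _ (pow_ne_zero _ two_ne_zero)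

theorem zeta_sq (m : ℕ) : zeta m ^ 2 = X m * zeta m - 1 := by
  have h := Complex.two_cos ((2 * Real.pi / 2 ^ (m + 2) : ℝ) : ℂ)
  rw [← Complex.ofReal_ofNat, ← Complex.ofReal_cos, ← Complex.ofReal_mul] at h
  rw [← X] at h
  rw [h, zeta, add_mul, ← Complex.exp_add, ← Complex.exp_add, ← Complex.exp_nat_mul]
  push_cast
  ring_nf
  simp

theorem finrank_adjoin_zeta (m : ℕ) : finrank ℚ ℚ⟮zeta m⟯ = 2 ^ (m + 1) := by
  have hint := (isPrimitiveRoot_zeta m).isIntegral (by positivity)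
  rw [adjoin.finrank (hint.tower_top (A := ℚ)),
    ← Polynomial.cyclotomic_eq_minpoly_rat (isPrimitiveRoot_zeta m) (by positivity),
    Polynomial.natDegree_cyclotomic, Nat.totient_prime_pow Nat.prime_two (by omega)]
  simp

theorem finrank_adjoin_ofReal {x : ℝ} (hx : IsIntegral ℚ x) :
    finrank ℚ ℚ⟮(x : ℂ)⟯ = finrank ℚ ℚ⟮x⟯ := by
  rw [adjoin.finrank (x := (x : ℂ)) (hx.algebraMap (B := ℂ)), adjoin.finrank hx]
  exact congrArg Polynomial.natDegree (minpoly.algebraMap_eq (algebraMap ℝ ℂ).injective x)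

theorem finrank_adjoin_X (m : ℕ) : finrank ℚ ℚ⟮X m⟯ = 2 ^ m := by
  refine (finrank_adjoin_X_le m).antisymm ?_
  have : FiniteDimensional ℚ ℚ⟮(X m : ℂ)⟯ :=
    adjoin.finiteDimensional ((isIntegral_X m).algebraMap (B := ℂ))
  have h := ℚ⟮(X m : ℂ)⟯.finrank_adjoin_simple_le_two_mul (mem_adjoin_simple_self ℚ _)
    (neg_mem (one_mem _)) (by rw [zeta_sq]; ring)
  rw [finrank_adjoin_zeta, finrank_adjoin_ofReal (isIntegral_X m), pow_succ'] at h
  omega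

theorem X_succ_notMem_adjoin_X (m : ℕ) : X (m + 1) ∉ ℚ⟮X m⟯ := by
  intro hmem
  have : FiniteDimensional ℚ ℚ⟮X m⟯ := adjoin.finiteDimensional (isIntegral_X m)
  have h := finrank_le_of_le_right (adjoin_simple_le_iff.2 hmem)
  rw [finrank_adjoin_X, finrank_adjoin_X, pow_succ] at h
  have := Nat.one_le_two_pow (n := m)
  omega

theorem eq_zero_of_add_mul_X_succ_eq_zero {m : ℕ} {A B : ℝ} (hA : A ∈ ℚ⟮X m⟯) (hB : B ∈ ℚ⟮X m⟯)
    (h : A + B * X (m + 1) = 0) : A = 0 ∧ B = 0 := by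
  obtain rfl | hB0 := eq_or_ne B 0
  · simpa using h
  refine absurd ?_ (X_succ_notMem_adjoin_X m)
  rw [show X (m + 1) = -A / B by field_simp; linarith]
  exact div_mem (neg_mem hA) hB

theorem stmt1_general (n ℓ : ℕ) (hn : 1 ≤ n) (c : ℕ → ℝ)
    (hc : ∀ k, c k ∈ Algebra.adjoin ℤ ({X (n - 1)} : Set ℝ))
    (hper : ∀ k, 1 ≤ k → c (k + ℓ) = c k)
    (hconv : CFConv c (X n)) :
    cfNum c ℓ ^ 2 - X n ^ 2 * cfDen c ℓ ^ 2 = (-1 : ℝ) ^ ℓ := by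
  obtain ⟨m, rfl⟩ : ∃ m, n = m + 1 := ⟨n - 1, by omega⟩
  set p := cfNum c ℓ
  set q := cfDen c ℓ
  have hcF (k : ℕ) : c k ∈ ℚ⟮X m⟯ := mem_adjoin_simple_of_mem_adjoin_int (hc k)
  have hmem := cfNum_mem_and_cfDen_mem hcF
  have hA : q * (2 + X m) - (cfNum c (ℓ + 1) - c 0 * p) ∈ ℚ⟮X m⟯ :=
    sub_mem (mul_mem (hmem ℓ).2 (add_mem (ofNat_mem _ 2) (mem_adjoin_simple_self ℚ _)))
      (sub_mem (hmem (ℓ + 1)).1 (mul_mem (hcF 0) (hmem ℓ).1))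
  have hB : cfDen c (ℓ + 1) - c 0 * q - p ∈ ℚ⟮X m⟯ :=
    sub_mem (sub_mem (hmem (ℓ + 1)).2 (mul_mem (hcF 0) (hmem ℓ).2)) (hmem ℓ).1
  obtain ⟨hA0, hB0⟩ := eq_zero_of_add_mul_X_succ_eq_zero hA hB <| by
    linear_combination hconv.quadratic_of_periodic (X_pos m).ne' hper - q * X_succ_sq m
  linear_combination -cfNum_mul_cfDen_sub c ℓ - q * hA0 - p * hB0 - q ^ 2 * X_succ_sq m

theorem stmt1 (n ℓ : ℕ) (hn : 1 ≤ n) (hℓ : 1 ≤ ℓ) (c : ℕ → ℝ)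
    (hc : ∀ k, c k ∈ Algebra.adjoin ℤ ({X (n - 1)} : Set ℝ))
    (hper : ∀ k, 1 ≤ k → c (k + ℓ) = c k)
    (hconv : CFConv c (X n)) :
    cfNum c ℓ ^ 2 - X n ^ 2 * cfDen c ℓ ^ 2 = (-1 : ℝ) ^ ℓ :=
  stmt1_general n ℓ hn c hc hper hconv
end

section
/- Let n ≥ 1 and let p, q, a₀ ∈ ℤ[X_{n-1}] satisfy p² − X_n²·q² = 1, q·a₀ = p − 1 (i.e. q divides p − 1 in ℤ[X_{n-1}]), and p·q > 0. Then the periodic continued fraction [a₀, q, 2a₀, q, 2a₀, …] (i.e. the sequence c with c₀ = a₀, c_{2k+1} = q and c_{2k+2} = 2a₀ for all k ≥ 0) converges to X_n. -/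
/-!
Put `x = X n`, `t = p + qx` and `s = p - qx`. The Pell equation says `ts = 1`, so `t` and `s` are
the roots of `Y² - 2pY + 1`, and since `qa₀ = p - 1` the two-step recurrence of the convergents
with partial quotients `q, 2a₀` is solved by `tᵐ` and `sᵐ`. For suitable `α, β` (depending on the
parity of `k`) the numerator `p_k` and `x q_k` come out as `αtᵐ + βsᵐ` and `αtᵐ - βsᵐ`, so
`p_k / q_k = x (αtᵐ + βsᵐ) / (αtᵐ - βsᵐ)`. Finally `t² - s² = 4pqx > 0`, so `|s| < |t|` and the
`s`-terms are negligible.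
-/

open Filter Topology

lemma X_pos_s4 {n : ℕ} (hn : 1 ≤ n) : 0 < X n := by
  have h8 : (8 : ℝ) ≤ 2 ^ (n + 2) := by
    calc (8 : ℝ) = 2 ^ 3 := by norm_num
      _ ≤ 2 ^ (n + 2) := pow_le_pow_right₀ (by norm_num) (by omega)
  have hlt : 2 * Real.pi / 2 ^ (n + 2) < Real.pi / 2 := by
    rw [div_lt_div_iff₀ (by positivity) (by norm_num)]
    nlinarith [Real.pi_pos]
  have hgt : -(Real.pi / 2) < 2 * Real.pi / 2 ^ (n + 2) := by
    linarith [Real.pi_pos, show 0 < 2 * Real.pi / 2 ^ (n + 2) by positivity]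
  exact mul_pos two_pos (Real.cos_pos_of_mem_Ioo ⟨hgt, hlt⟩)

lemma tendsto_atTop_of_even_of_odd {α : Type*} {f : ℕ → α} {l : Filter α}
    (h₀ : Tendsto (fun m ↦ f (2 * m)) atTop l)
    (h₁ : Tendsto (fun m ↦ f (2 * m + 1)) atTop l) : Tendsto f atTop l := by
  intro u hu
  obtain ⟨N₀, hN₀⟩ := eventually_atTop.mp (h₀ hu)
  obtain ⟨N₁, hN₁⟩ := eventually_atTop.mp (h₁ hu)
  refine eventually_atTop.mpr ⟨2 * max N₀ N₁, fun k hk ↦ ?_⟩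
  obtain ⟨m, rfl | rfl⟩ := Nat.even_or_odd' k
  · exact hN₀ m (by omega)
  · exact hN₁ m (by omega)

lemma tendsto_mul_add_div_sub {t s α : ℝ} (x β : ℝ) (hα : α ≠ 0) (hst : |s| < |t|) :
    Tendsto (fun m : ℕ ↦ x * (α * t ^ m + β * s ^ m) / (α * t ^ m - β * s ^ m)) atTop (𝓝 x) := by
  have ht : t ≠ 0 := abs_pos.mp ((abs_nonneg s).trans_lt hst)
  have hw : Tendsto (fun m : ℕ ↦ β / α * (s / t) ^ m) atTop (𝓝 0) := by
    have hr : |s / t| < 1 := by rwa [abs_div, div_lt_one (abs_pos.mpr ht)]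
    simpa using (tendsto_pow_atTop_nhds_zero_of_abs_lt_one hr).const_mul (β / α)
  have hlim : Tendsto (fun m : ℕ ↦ x * ((1 + β / α * (s / t) ^ m) / (1 - β / α * (s / t) ^ m)))
      atTop (𝓝 x) := by
    simpa using (((tendsto_const_nhds (x := (1 : ℝ))).add hw).div
      ((tendsto_const_nhds (x := (1 : ℝ))).sub hw) (by norm_num)).const_mul x
  refine hlim.congr fun m ↦ ?_
  rw [div_pow]
  field_simp

lemma periodic_recurrence_eq_pow {c : ℕ → ℝ} {p q a₀ t s : ℝ} (f : ℕ → ℝ)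
    (hf : ∀ k, f (k + 2) = c (k + 1) * f (k + 1) + f k)
    (hcodd : ∀ k, c (2 * k + 1) = q) (hceven : ∀ k, c (2 * k + 2) = 2 * a₀)
    (hqa : q * a₀ = p - 1) (ht : t ^ 2 = 2 * p * t - 1) (hs : s ^ 2 = 2 * p * s - 1) {A B : ℝ}
    (h₁ : f 1 = A * (t - 1) + B * (s - 1)) (h₂ : f 2 = q * (A * t + B * s)) (m : ℕ) :
    f (2 * m + 1) = A * (t - 1) * t ^ m + B * (s - 1) * s ^ m ∧
      f (2 * m + 2) = q * (A * t ^ (m + 1) + B * s ^ (m + 1)) := by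
  induction m with
  | zero => simpa using ⟨h₁, h₂⟩
  | succ m ih =>
    have hodd : f (2 * (m + 1) + 1) = A * (t - 1) * t ^ (m + 1) + B * (s - 1) * s ^ (m + 1) := by
      rw [show 2 * (m + 1) + 1 = (2 * m + 1) + 2 by ring, hf, hceven, ih.1, ih.2]
      linear_combination -(A * t ^ m) * ht - (B * s ^ m) * hs
        + 2 * (A * t ^ (m + 1) + B * s ^ (m + 1)) * hqa
    refine ⟨hodd, ?_⟩
    rw [show 2 * (m + 1) + 2 = (2 * (m + 1)) + 2 by ring, hf, hcodd, hodd,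
      show 2 * (m + 1) = 2 * m + 2 by ring, ih.2]
    ring

theorem cfConv_of_pell {x p q a₀ : ℝ} (hpell : p ^ 2 - x ^ 2 * q ^ 2 = 1) (hqa : q * a₀ = p - 1)
    (hpos : 0 < p * q * x) {c : ℕ → ℝ} (hc0 : c 0 = a₀) (hcodd : ∀ k, c (2 * k + 1) = q)
    (hceven : ∀ k, c (2 * k + 2) = 2 * a₀) : CFConv c x := by
  have hq : q ≠ 0 := by rintro rfl; simp at hpos
  have hx : x ≠ 0 := by rintro rfl; simp at hpos
  set t := p + q * x
  set s := p - q * x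
  have ht : t ^ 2 = 2 * p * t - 1 := by linear_combination -hpell
  have hs : s ^ 2 = 2 * p * s - 1 := by linear_combination -hpell
  have hst : |s| < |t| := sq_lt_sq.mp (by linear_combination 4 * hpos)
  have ht₀ : t ≠ 0 := abs_pos.mp ((abs_nonneg s).trans_lt hst)
  have ht₁ : t - 1 ≠ 0 := fun h ↦
    hst.ne (by rw [show s = t by linear_combination (t - 1 - 2 * p) * h - ht])
  have hnum := periodic_recurrence_eq_pow (cfNum c) (fun _ ↦ rfl) hcodd hceven hqa ht hs
    (A := 1 / (2 * q)) (B := 1 / (2 * q))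
    (by show c 0 = _; field_simp; linear_combination 2 * hc0 * q + 2 * hqa)
    (by show c 1 * c 0 + 1 = _; rw [hcodd 0, hc0]; field_simp; linear_combination 2 * hqa)
  have hden := periodic_recurrence_eq_pow (cfDen c) (fun _ ↦ rfl) hcodd hceven hqa ht hs
    (A := 1 / (2 * x * q)) (B := -(1 / (2 * x * q)))
    (by show (1 : ℝ) = _; field_simp; ring)
    (by show c 1 * 1 + 0 = _; rw [hcodd 0]; field_simp; ring)
  refine tendsto_atTop_of_even_of_odd ?_ ?_
  · refine (tendsto_mul_add_div_sub x (s - 1) ht₁ hst).congr fun m ↦ ?_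
    rw [(hnum m).1, (hden m).1]
    field_simp
    ring
  · refine (tendsto_mul_add_div_sub x s ht₀ hst).congr fun m ↦ ?_
    rw [show 2 * m + 1 + 1 = 2 * m + 2 by ring, (hnum m).2, (hden m).2]
    field_simp
    ring

theorem stmt4_general (n : ℕ) (hn : 1 ≤ n) (p q a₀ : ℝ)
    (hpell : p ^ 2 - X n ^ 2 * q ^ 2 = 1)
    (hdvd : q * a₀ = p - 1)
    (hpos : p * q > 0)
    (c : ℕ → ℝ) (hc0 : c 0 = a₀)
    (hcodd : ∀ k, c (2 * k + 1) = q) (hceven : ∀ k, c (2 * k + 2) = 2 * a₀) :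
    CFConv c (X n) :=
  cfConv_of_pell hpell hdvd (mul_pos hpos (X_pos_s4 hn)) hc0 hcodd hceven

theorem stmt4 (n : ℕ) (hn : 1 ≤ n) (p q a₀ : ℝ)
    (hp : p ∈ Algebra.adjoin ℤ ({X (n - 1)} : Set ℝ))
    (hq : q ∈ Algebra.adjoin ℤ ({X (n - 1)} : Set ℝ))
    (ha₀ : a₀ ∈ Algebra.adjoin ℤ ({X (n - 1)} : Set ℝ))
    (hpell : p ^ 2 - X n ^ 2 * q ^ 2 = 1)
    (hdvd : q * a₀ = p - 1)
    (hpos : p * q > 0)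
    (c : ℕ → ℝ) (hc0 : c 0 = a₀)
    (hcodd : ∀ k, c (2 * k + 1) = q) (hceven : ∀ k, c (2 * k + 2) = 2 * a₀) :
    CFConv c (X n) :=
  stmt4_general n hn p q a₀ hpell hdvd hpos c hc0 hcodd hceven
end

section
/- Let n ≥ 1 and let p, q, a₀ ∈ ℤ[X_{n-1}] satisfy p² − X_n²·q² = 1, q·a₀ = p − 1, and q ≠ 0. Then the periodic continued fraction [a₀, q, 2a₀, q, 2a₀, …] (i.e. the sequence c with c₀ = a₀, c_{2k+1} = q and c_{2k+2} = 2a₀ for all k ≥ 0) converges to X_n if p·q > 0, and converges to −X_n if p·q < 0. -/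
lemma cf_forms (x p q a₀ : ℝ)
    (hpell : p ^ 2 - x ^ 2 * q ^ 2 = 1)
    (hdvd : q * a₀ = p - 1) (hq0 : q ≠ 0)
    (c : ℕ → ℝ) (hc0 : c 0 = a₀)
    (hcodd : ∀ k, c (2 * k + 1) = q) (hceven : ∀ k, c (2 * k + 2) = 2 * a₀) :
    ∀ m : ℕ,
      cfNum c (2 * m + 1) + x * cfDen c (2 * m + 1) = (p + x * q) ^ m * (a₀ + x) ∧
      cfNum c (2 * m + 2) + x * cfDen c (2 * m + 2) = (p + x * q) ^ (m + 1) := by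
  have hkey : 2 * a₀ * (p + x * q) + (a₀ + x) = (p + x * q) * (a₀ + x) := by
    apply mul_left_cancel₀ hq0
    linear_combination (p + x * q + 1) * hdvd + hpell
  intro m
  induction m with
  | zero =>
    have h1 : c 1 = q := hcodd 0
    constructor
    · show c 0 + x * 1 = (p + x * q) ^ 0 * (a₀ + x)
      rw [hc0]; ring
    · show c 1 * cfNum c 1 + cfNum c 0 + x * (c 1 * cfDen c 1 + cfDen c 0) = _
      show c 1 * c 0 + 1 + x * (c 1 * 1 + 0) = _
      rw [hc0, h1]
      linear_combination hdvd
  | succ m ih =>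
    obtain ⟨ih1, ih2⟩ := ih
    have e1 : cfNum c (2 * (m + 1) + 1) =
        c (2 * m + 2) * cfNum c (2 * m + 2) + cfNum c (2 * m + 1) := by
      have : 2 * (m + 1) + 1 = (2 * m + 1) + 2 := by ring
      rw [this]; rfl
    have e2 : cfDen c (2 * (m + 1) + 1) =
        c (2 * m + 2) * cfDen c (2 * m + 2) + cfDen c (2 * m + 1) := by
      have : 2 * (m + 1) + 1 = (2 * m + 1) + 2 := by ring
      rw [this]; rfl
    have g1 : cfNum c (2 * (m + 1) + 1) + x * cfDen c (2 * (m + 1) + 1) =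
        (p + x * q) ^ (m + 1) * (a₀ + x) := by
      rw [e1, e2, hceven m]
      linear_combination (2 * a₀) * ih2 + ih1 + (p + x * q) ^ m * hkey
    refine ⟨g1, ?_⟩
    have e3 : cfNum c (2 * (m + 1) + 2) =
        c (2 * (m + 1) + 1) * cfNum c (2 * (m + 1) + 1) + cfNum c (2 * m + 2) := by
      have h4 : 2 * (m + 1) + 2 = (2 * m + 2) + 2 := by ring
      have h5 : (2 * m + 2) + 1 = 2 * (m + 1) + 1 := by ring
      rw [h4]; show c ((2*m+2)+1) * cfNum c ((2*m+2)+1) + cfNum c (2*m+2) = _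
      rw [h5]
    have e4 : cfDen c (2 * (m + 1) + 2) =
        c (2 * (m + 1) + 1) * cfDen c (2 * (m + 1) + 1) + cfDen c (2 * m + 2) := by
      have h4 : 2 * (m + 1) + 2 = (2 * m + 2) + 2 := by ring
      have h5 : (2 * m + 2) + 1 = 2 * (m + 1) + 1 := by ring
      rw [h4]; show c ((2*m+2)+1) * cfDen c ((2*m+2)+1) + cfDen c (2*m+2) = _
      rw [h5]
    rw [e3, e4, hcodd (m + 1)]
    linear_combination q * g1 + ih2 + (p + x * q) ^ (m + 1) * hdvd

lemma cf_main (x p q a₀ : ℝ) (hx : x ≠ 0)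
    (hpell : p ^ 2 - x ^ 2 * q ^ 2 = 1)
    (hdvd : q * a₀ = p - 1) (hq0 : q ≠ 0)
    (hmu : |p - x * q| < 1)
    (c : ℕ → ℝ) (hc0 : c 0 = a₀)
    (hcodd : ∀ k, c (2 * k + 1) = q) (hceven : ∀ k, c (2 * k + 2) = 2 * a₀) :
    CFConv c x := by
  have hprod : (p - x * q) * (p + x * q) = 1 := by linear_combination hpell
  set lam := p + x * q with hlam_def
  set mu := p - x * q with hmu_def
  have hmu0 : mu ≠ 0 := left_ne_zero_of_mul_eq_one hprod
  have hlam0 : lam ≠ 0 := right_ne_zero_of_mul_eq_one hprod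
  have habs : |mu| * |lam| = 1 := by rw [← abs_mul, hprod, abs_one]
  have hlampos : 0 < |lam| := abs_pos.mpr hlam0
  have hlam1 : 1 < |lam| := by nlinarith [abs_nonneg mu]
  have hax : a₀ + x ≠ 0 := by
    intro h
    have h2 : q * (a₀ + x) = lam - 1 := by rw [hlam_def]; linear_combination hdvd
    rw [h, mul_zero] at h2
    have h3 : lam = 1 := by linarith
    rw [h3] at hlam1; simp at hlam1
  have F := cf_forms x p q a₀ hpell hdvd hq0 c hc0 hcodd hceven
  have G := cf_forms (-x) p q a₀ (by linear_combination hpell) hdvd hq0 c hc0 hcodd hceven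
  set r : ℕ → ℝ := fun k =>
    (cfNum c (k + 1) - x * cfDen c (k + 1)) / (cfNum c (k + 1) + x * cfDen c (k + 1))
    with hr_def
  set C : ℝ := |a₀ - x| / |a₀ + x| + 1 with hC_def
  have hC1 : 1 ≤ C := by
    have : 0 ≤ |a₀ - x| / |a₀ + x| := by positivity
    rw [hC_def]; linarith
  have claim : ∀ k, (cfNum c (k + 1) + x * cfDen c (k + 1) ≠ 0) ∧ |r k| ≤ C * |mu| ^ k := by
    intro k
    rcases Nat.even_or_odd k with ⟨m, hm⟩ | ⟨m, hm⟩
    · have hk : k = 2 * m := by omega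
      subst hk
      have hA : cfNum c (2 * m + 1) + x * cfDen c (2 * m + 1) = lam ^ m * (a₀ + x) := (F m).1
      have hB : cfNum c (2 * m + 1) - x * cfDen c (2 * m + 1) = mu ^ m * (a₀ - x) := by
        rw [hmu_def]; linear_combination (G m).1
      have hA0 : cfNum c (2 * m + 1) + x * cfDen c (2 * m + 1) ≠ 0 := by
        rw [hA]; exact mul_ne_zero (pow_ne_zero _ hlam0) hax
      refine ⟨hA0, ?_⟩
      have hrk : r (2 * m) = (cfNum c (2 * m + 1) - x * cfDen c (2 * m + 1)) /
          (cfNum c (2 * m + 1) + x * cfDen c (2 * m + 1)) := rfl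
      rw [hrk, hB, hA, abs_div, abs_mul, abs_mul, abs_pow, abs_pow,
        div_le_iff₀ (mul_pos (pow_pos hlampos m) (abs_pos.mpr hax))]
      have hpow : |mu| ^ (2 * m) = |mu| ^ m * |mu| ^ m := by rw [two_mul, pow_add]
      have h1 : |mu| ^ m * |lam| ^ m = 1 := by rw [← mul_pow, habs, one_pow]
      have hCc : C * |a₀ + x| = |a₀ - x| + |a₀ + x| := by
        rw [hC_def]; field_simp
      have heq : C * |mu| ^ (2 * m) * (|lam| ^ m * |a₀ + x|) =
          (|a₀ - x| + |a₀ + x|) * |mu| ^ m := by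
        calc C * |mu| ^ (2 * m) * (|lam| ^ m * |a₀ + x|)
            = (C * |a₀ + x|) * |mu| ^ m * (|mu| ^ m * |lam| ^ m) := by rw [hpow]; ring
          _ = (|a₀ - x| + |a₀ + x|) * |mu| ^ m := by rw [h1, hCc]; ring
      rw [heq]
      nlinarith [mul_nonneg (pow_nonneg (abs_nonneg mu) m) (abs_nonneg (a₀ + x))]
    · subst hm
      have hA : cfNum c (2 * m + 2) + x * cfDen c (2 * m + 2) = lam ^ (m + 1) := (F m).2
      have hB : cfNum c (2 * m + 2) - x * cfDen c (2 * m + 2) = mu ^ (m + 1) := by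
        rw [hmu_def]; linear_combination (G m).2
      have hA0 : cfNum c (2 * m + 2) + x * cfDen c (2 * m + 2) ≠ 0 := by
        rw [hA]; exact pow_ne_zero _ hlam0
      have hidx : 2 * m + 1 + 1 = 2 * m + 2 := rfl
      refine ⟨by rw [hidx]; exact hA0, ?_⟩
      have hrk : r (2 * m + 1) = (cfNum c (2 * m + 2) - x * cfDen c (2 * m + 2)) /
          (cfNum c (2 * m + 2) + x * cfDen c (2 * m + 2)) := rfl
      rw [hrk, hB, hA, abs_div, abs_pow, abs_pow,
        div_le_iff₀ (pow_pos hlampos (m + 1))]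
      have h1 : |mu| ^ (m + 1) * |lam| ^ (m + 1) = 1 := by rw [← mul_pow, habs, one_pow]
      have hsplit : |mu| ^ (2 * m + 1) = |mu| ^ m * |mu| ^ (m + 1) := by
        rw [← pow_add]; congr 1; omega
      calc |mu| ^ (m + 1) ≤ |mu| ^ m :=
            pow_le_pow_of_le_one (abs_nonneg mu) hmu.le (Nat.le_succ m)
        _ ≤ C * |mu| ^ m := le_mul_of_one_le_left (pow_nonneg (abs_nonneg mu) m) hC1
        _ = C * |mu| ^ (2 * m + 1) * |lam| ^ (m + 1) := by
            rw [hsplit]; linear_combination (C * |mu| ^ m) * h1.symm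
  have hr0 : Filter.Tendsto r Filter.atTop (nhds 0) := by
    apply squeeze_zero_norm (fun k => by simpa [Real.norm_eq_abs] using (claim k).2)
    have := (tendsto_pow_atTop_nhds_zero_of_lt_one (abs_nonneg mu) hmu).const_mul C
    simpa using this
  have hrabs : Filter.Tendsto (fun k => |r k|) Filter.atTop (nhds 0) := by
    simpa using hr0.abs
  show Filter.Tendsto (fun k => cfNum c (k + 1) / cfDen c (k + 1)) Filter.atTop (nhds x)
  rw [← tendsto_sub_nhds_zero_iff]
  apply squeeze_zero_norm' (a := fun k => 4 * |x| * |r k|)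
  · filter_upwards [hrabs.eventually_lt_const (by norm_num : (0 : ℝ) < 1 / 2)] with k hk
    obtain ⟨hA0, -⟩ := claim k
    have hrk : r k = (cfNum c (k + 1) - x * cfDen c (k + 1)) /
        (cfNum c (k + 1) + x * cfDen c (k + 1)) := rfl
    set A := cfNum c (k + 1) + x * cfDen c (k + 1) with hA_def
    set B := cfNum c (k + 1) - x * cfDen c (k + 1) with hB_def
    have hBA : B = r k * A := by rw [hrk, div_mul_cancel₀ _ hA0]
    have habsA : 0 < |A| := abs_pos.mpr hA0
    have hB_abs : |B| = |r k| * |A| := by rw [hBA, abs_mul]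
    have hABsub : |A| - |B| ≤ |A - B| := abs_sub_abs_le_abs_sub _ _
    have hABeq : |A - B| = 2 * (|x| * |cfDen c (k + 1)|) := by
      have h2 : A - B = 2 * (x * cfDen c (k + 1)) := by rw [hA_def, hB_def]; ring
      rw [h2, abs_mul, abs_mul, abs_two]
    have hx' : (0 : ℝ) < |x| := abs_pos.mpr hx
    have hkA : |r k| * |A| < 1 / 2 * |A| := mul_lt_mul_of_pos_right hk habsA
    have h4 : |A| ≤ 4 * (|x| * |cfDen c (k + 1)|) := by nlinarith
    have hDpos : 0 < |cfDen c (k + 1)| := by nlinarith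
    have hD0 : cfDen c (k + 1) ≠ 0 := by
      intro h; rw [h, abs_zero] at hDpos; exact lt_irrefl _ hDpos
    have hfd : cfNum c (k + 1) / cfDen c (k + 1) - x = B / cfDen c (k + 1) := by
      rw [hB_def]; field_simp
    rw [Real.norm_eq_abs, hfd, abs_div, div_le_iff₀ hDpos]
    rw [hB_abs]
    calc |r k| * |A| ≤ |r k| * (4 * (|x| * |cfDen c (k + 1)|)) :=
          mul_le_mul_of_nonneg_left h4 (abs_nonneg _)
      _ = 4 * |x| * |r k| * |cfDen c (k + 1)| := by ring
  · have := hrabs.const_mul (4 * |x|)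
    simpa using this

theorem stmt5 (n : ℕ) (hn : 1 ≤ n) (p q a₀ : ℝ)
    (hp : p ∈ Algebra.adjoin ℤ ({X (n - 1)} : Set ℝ))
    (hq : q ∈ Algebra.adjoin ℤ ({X (n - 1)} : Set ℝ))
    (ha₀ : a₀ ∈ Algebra.adjoin ℤ ({X (n - 1)} : Set ℝ))
    (hpell : p ^ 2 - X n ^ 2 * q ^ 2 = 1)
    (hdvd : q * a₀ = p - 1)
    (hq0 : q ≠ 0)
    (c : ℕ → ℝ) (hc0 : c 0 = a₀)
    (hcodd : ∀ k, c (2 * k + 1) = q) (hceven : ∀ k, c (2 * k + 2) = 2 * a₀) :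
    (p * q > 0 → CFConv c (X n)) ∧ (p * q < 0 → CFConv c (-(X n))) := by
  have hpi := Real.pi_pos
  have hxpos : 0 < X n := by
    rw [X]
    have h8 : (8 : ℝ) ≤ 2 ^ (n + 2) := by
      calc (8 : ℝ) = 2 ^ 3 := by norm_num
        _ ≤ 2 ^ (n + 2) := by
          apply pow_le_pow_right₀ (by norm_num) (by omega)
    have hppos : (0 : ℝ) < 2 ^ (n + 2) := by positivity
    have h1 : 0 < 2 * Real.pi / 2 ^ (n + 2) := by positivity
    have h2 : 2 * Real.pi / 2 ^ (n + 2) < Real.pi / 2 := by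
      rw [div_lt_div_iff₀ hppos (by norm_num)]
      nlinarith
    have := Real.cos_pos_of_mem_Ioo (Set.mem_Ioo.mpr ⟨by linarith, h2⟩)
    linarith
  have hx0 : X n ≠ 0 := ne_of_gt hxpos
  have hprod : (p - X n * q) * (p + X n * q) = 1 := by linear_combination hpell
  have hsq : (p - X n * q) ^ 2 * (p + X n * q) ^ 2 = 1 := by
    rw [← mul_pow, hprod]; norm_num
  constructor
  · intro hpq
    have h1 : 1 < (p + X n * q) ^ 2 := by
      nlinarith [mul_pos hxpos hpq, sq_nonneg (X n * q)]
    have h2 : (p - X n * q) ^ 2 < 1 := by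
      nlinarith [sq_nonneg (p - X n * q)]
    exact cf_main (X n) p q a₀ hx0 hpell hdvd hq0
      ((sq_lt_one_iff_abs_lt_one _).mp h2) c hc0 hcodd hceven
  · intro hpq
    have h1 : 1 < (p - X n * q) ^ 2 := by
      nlinarith [mul_pos hxpos (neg_pos.mpr hpq), sq_nonneg (X n * q)]
    have h2 : (p + X n * q) ^ 2 < 1 := by
      nlinarith [sq_nonneg (p + X n * q)]
    have hmu : |p - -X n * q| < 1 := by
      have he : p - -X n * q = p + X n * q := by ring
      rw [he]; exact (sq_lt_one_iff_abs_lt_one _).mp h2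
    exact cf_main (-(X n)) p q a₀ (neg_ne_zero.mpr hx0) (by linear_combination hpell)
      hdvd hq0 hmu c hc0 hcodd hceven
end

section
/- Let n ≥ 1 and let p, q, a₁, a₃ ∈ ℤ[X_{n-1}] satisfy p² − X_n²·q² = −1, p·a₁ = X_n²·q − 1, p·a₃ = q − 1, and p·q > 0. Then the purely periodic continued fraction [a₁, p, a₃, a₁, p, a₃, …] (i.e. the sequence c with c_{3k} = a₁, c_{3k+1} = p, c_{3k+2} = a₃ for all k ≥ 0) converges to X_n. -/
/-! For either square root `d = ±x` of `x²`, the sequence `p_k + d q_k` satisfies the convergent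
recursion, and the relations `p a₁ = x² q - 1`, `p a₃ = q - 1` make one period of three partial
quotients multiply it by `p + d q`. Since `(p + x q)(p - x q) = -1` and `pq > 0`, we get
`|p - x q| < |p + x q|`, so in `p_k / q_k = x (F + E) / (F - E)`, where `F = p_k + x q_k` and
`E = p_k - x q_k`, the term `E` becomes negligible against `F` along each residue class mod 3. -/

open Filter Topology

theorem tendsto_of_tendsto_comp_mul_add {α : Type*} {f : ℕ → α} {l : Filter α} {k : ℕ}
    (hk : 0 < k) (h : ∀ r < k, Tendsto (fun m => f (k * m + r)) atTop l) :
    Tendsto f atTop l := by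
  intro s hs
  have hall : ∀ᶠ m in atTop, ∀ r ∈ Finset.range k, f (k * m + r) ∈ s :=
    (eventually_all_finset _).2 fun r hr => h r (Finset.mem_range.1 hr) hs
  obtain ⟨N, hN⟩ := eventually_atTop.1 hall
  refine mem_map.2 (mem_atTop_sets.2 ⟨k * N, fun n hn => ?_⟩)
  have hdiv : N ≤ n / k := (Nat.le_div_iff_mul_le hk).2 (by linarith [mul_comm k N])
  have := hN (n / k) hdiv (n % k) (Finset.mem_range.2 (Nat.mod_lt n hk))
  rwa [Nat.div_add_mod] at this

theorem tendsto_div_of_add_mul_eq_pow {N D : ℕ → ℝ} {x A B l u : ℝ} (hx : x ≠ 0) (hA : A ≠ 0)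
    (hul : |u| < |l|) (hF : ∀ m, N m + x * D m = A * l ^ m)
    (hE : ∀ m, N m + -x * D m = B * u ^ m) :
    Tendsto (fun m => N m / D m) atTop (𝓝 x) := by
  have hl : l ≠ 0 := abs_pos.1 ((abs_nonneg u).trans_lt hul)
  set w := u / l
  have hratio : ∀ m, N m / D m = x * (A + B * w ^ m) / (A - B * w ^ m) := by
    intro m
    have hwm : l ^ m * w ^ m = u ^ m := by rw [← mul_pow, mul_div_cancel₀ _ hl]
    have hN : 2 * x * N m = x * (l ^ m * (A + B * w ^ m)) := by
      linear_combination x * (hF m + hE m) - x * B * hwm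
    have hD : 2 * x * D m = l ^ m * (A - B * w ^ m) := by
      linear_combination hF m - hE m + B * hwm
    rw [← mul_div_mul_left (N m) (D m) (mul_ne_zero two_ne_zero hx), hN, hD, mul_left_comm,
      mul_div_mul_left _ _ (pow_ne_zero m hl)]
  have hw : Tendsto (fun m => w ^ m) atTop (𝓝 0) :=
    tendsto_pow_atTop_nhds_zero_of_abs_lt_one (by rwa [abs_div, div_lt_one (abs_pos.2 hl)])
  have hlim : Tendsto (fun m => x * (A + B * w ^ m) / (A - B * w ^ m)) atTop
      (𝓝 (x * (A + B * 0) / (A - B * 0))) :=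
    ((tendsto_const_nhds.add (tendsto_const_nhds.mul hw)).const_mul x).div
      (tendsto_const_nhds.sub (tendsto_const_nhds.mul hw)) (by simpa using hA)
  rw [mul_zero, add_zero, sub_zero, mul_div_assoc, div_self hA, mul_one] at hlim
  exact hlim.congr fun m => (hratio m).symm

section Convergents

variable (c : ℕ → ℝ)

theorem cfNum_add_mul_cfDen_add_two (d : ℝ) (k : ℕ) :
    cfNum c (k + 2) + d * cfDen c (k + 2) =
      c (k + 1) * (cfNum c (k + 1) + d * cfDen c (k + 1)) + (cfNum c k + d * cfDen c k) := by
  simp only [cfNum, cfDen]; ring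

variable {c} {x p q a₁ a₃ : ℝ}

theorem cfNum_add_mul_cfDen_of_periodic (d : ℝ) (hd : d ^ 2 = x ^ 2) (hp : p ≠ 0)
    (hpell : p ^ 2 - x ^ 2 * q ^ 2 = -1) (hdvd1 : p * a₁ = x ^ 2 * q - 1)
    (hdvd3 : p * a₃ = q - 1) (hc1 : ∀ k, c (3 * k) = a₁) (hc2 : ∀ k, c (3 * k + 1) = p)
    (hc3 : ∀ k, c (3 * k + 2) = a₃) (m : ℕ) :
    cfNum c (3 * m) + d * cfDen c (3 * m) = (p + d * q) ^ m ∧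
      cfNum c (3 * m + 1) + d * cfDen c (3 * m + 1) = (a₁ + d) * (p + d * q) ^ m ∧
      cfNum c (3 * m + 2) + d * cfDen c (3 * m + 2) = d * (p + d * q) * (p + d * q) ^ m := by
  have hstep₁ : p * (a₁ + d) + 1 = d * (p + d * q) := by linear_combination hdvd1 - q * hd
  have hstep₂ : a₃ * (d * (p + d * q)) + (a₁ + d) = p + d * q :=
    mul_left_cancel₀ hp <| by
      linear_combination d * (p + d * q) * hdvd3 + hdvd1 - hpell + (q ^ 2 - q) * hd
  have hrec := cfNum_add_mul_cfDen_add_two c d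
  induction m with
  | zero =>
    have h0 : c 0 = a₁ := hc1 0
    have h1 : c 1 = p := hc2 0
    refine ⟨by simp [cfNum, cfDen], by simp [cfNum, cfDen, h0], ?_⟩
    rw [hrec 0]
    simp only [cfNum, cfDen, h0, h1]
    linear_combination hstep₁
  | succ m ih =>
    obtain ⟨-, e₁, e₂⟩ := ih
    have f₀ : cfNum c (3 * (m + 1)) + d * cfDen c (3 * (m + 1)) = (p + d * q) ^ (m + 1) := by
      rw [show 3 * (m + 1) = 3 * m + 1 + 2 by ring, hrec, hc3 m, e₁, e₂]
      linear_combination (p + d * q) ^ m * hstep₂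
    have f₁ : cfNum c (3 * (m + 1) + 1) + d * cfDen c (3 * (m + 1) + 1) =
        (a₁ + d) * (p + d * q) ^ (m + 1) := by
      rw [show 3 * (m + 1) + 1 = 3 * m + 2 + 2 by ring, hrec,
        show 3 * m + 2 + 1 = 3 * (m + 1) by ring, hc1, f₀, e₂]
      ring
    refine ⟨f₀, f₁, ?_⟩
    rw [hrec, hc2, f₁, f₀]
    linear_combination (p + d * q) ^ (m + 1) * hstep₁

theorem cfConv_of_pell_of_periodic (hx : 1 ≤ x) (hpell : p ^ 2 - x ^ 2 * q ^ 2 = -1)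
    (hdvd1 : p * a₁ = x ^ 2 * q - 1) (hdvd3 : p * a₃ = q - 1) (hpos : 0 < p * q)
    (hc1 : ∀ k, c (3 * k) = a₁) (hc2 : ∀ k, c (3 * k + 1) = p)
    (hc3 : ∀ k, c (3 * k + 2) = a₃) : CFConv c x := by
  have hx0 : x ≠ 0 := (zero_lt_one.trans_le hx).ne'
  have hp : p ≠ 0 := left_ne_zero_of_mul hpos.ne'
  set l := p + x * q
  set u := p + -x * q
  have hlu : l * u = -1 := by linear_combination hpell
  have hul : |u| < |l| := sq_lt_sq.1 (by nlinarith)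
  have hl : l ≠ 0 := by rintro h; simp [h] at hlu
  have ha : a₁ + x ≠ 0 := by
    intro h
    have hxl : x * l = 1 := by linear_combination p * h - hdvd1
    have hux : u = -x := by linear_combination x * hlu - u * hxl
    have hu : 1 ≤ |u| := by rw [hux, abs_neg, abs_of_pos (by linarith)]; exact hx
    have : |u| * |l| = 1 := by rw [← abs_mul, mul_comm, hlu, abs_neg, abs_one]
    nlinarith
  have hF := cfNum_add_mul_cfDen_of_periodic x rfl hp hpell hdvd1 hdvd3 hc1 hc2 hc3
  have hE := cfNum_add_mul_cfDen_of_periodic (-x) (neg_sq x) hp hpell hdvd1 hdvd3 hc1 hc2 hc3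
  refine (tendsto_add_atTop_iff_nat (f := fun k => cfNum c k / cfDen c k) 1).2
    (tendsto_of_tendsto_comp_mul_add three_pos fun r hr => ?_)
  interval_cases r
  · exact tendsto_div_of_add_mul_eq_pow hx0 one_ne_zero hul
      (fun m => (hF m).1.trans (one_mul _).symm) (fun m => (hE m).1.trans (one_mul _).symm)
  · exact tendsto_div_of_add_mul_eq_pow hx0 ha hul (fun m => (hF m).2.1) (fun m => (hE m).2.1)
  · exact tendsto_div_of_add_mul_eq_pow hx0 (mul_ne_zero hx0 hl) hul (fun m => (hF m).2.2)
      (fun m => (hE m).2.2)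

end Convergents

theorem one_lt_X {n : ℕ} (hn : 1 ≤ n) : 1 < X n := by
  have h8 : (8 : ℝ) ≤ 2 ^ (n + 2) := by
    calc (8 : ℝ) = 2 ^ 3 := by norm_num
      _ ≤ 2 ^ (n + 2) := pow_le_pow_right₀ (by norm_num) (by omega)
  have hangle : 2 * Real.pi / 2 ^ (n + 2) ≤ Real.pi / 4 := by
    rw [div_le_div_iff₀ (by positivity) (by norm_num)]
    nlinarith [Real.pi_pos]
  have hcos := Real.cos_le_cos_of_nonneg_of_le_pi (by positivity)
    (by linarith [Real.pi_pos]) hangle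
  rw [Real.cos_pi_div_four] at hcos
  unfold X
  linarith [Real.one_lt_sqrt_two]

theorem stmt8_general (n : ℕ) (hn : 1 ≤ n) (p q a₁ a₃ : ℝ)
    (hpell : p ^ 2 - X n ^ 2 * q ^ 2 = -1)
    (hdvd1 : p * a₁ = X n ^ 2 * q - 1)
    (hdvd3 : p * a₃ = q - 1)
    (hpos : p * q > 0)
    (c : ℕ → ℝ) (hc1 : ∀ k, c (3 * k) = a₁) (hc2 : ∀ k, c (3 * k + 1) = p)
    (hc3 : ∀ k, c (3 * k + 2) = a₃) :
    CFConv c (X n) :=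
  cfConv_of_pell_of_periodic (one_lt_X hn).le hpell hdvd1 hdvd3 hpos hc1 hc2 hc3

theorem stmt8 (n : ℕ) (hn : 1 ≤ n) (p q a₁ a₃ : ℝ)
    (hp : p ∈ Algebra.adjoin ℤ ({X (n - 1)} : Set ℝ))
    (hq : q ∈ Algebra.adjoin ℤ ({X (n - 1)} : Set ℝ))
    (ha₁ : a₁ ∈ Algebra.adjoin ℤ ({X (n - 1)} : Set ℝ))
    (ha₃ : a₃ ∈ Algebra.adjoin ℤ ({X (n - 1)} : Set ℝ))
    (hpell : p ^ 2 - X n ^ 2 * q ^ 2 = -1)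
    (hdvd1 : p * a₁ = X n ^ 2 * q - 1)
    (hdvd3 : p * a₃ = q - 1)
    (hpos : p * q > 0)
    (c : ℕ → ℝ) (hc1 : ∀ k, c (3 * k) = a₁) (hc2 : ∀ k, c (3 * k + 1) = p)
    (hc3 : ∀ k, c (3 * k + 2) = a₃) :
    CFConv c (X n) :=
  stmt8_general n hn p q a₁ a₃ hpell hdvd1 hdvd3 hpos c hc1 hc2 hc3
end

section
/- Let n ≥ 1. Then η_{n-1} ∈ ℤ[X_{n-1}], and there exists q ∈ ℤ[X_{n-1}] such that η_n = η_{n-1} + X_n·q and η_{n-1}² − X_n²·q² = −1 (i.e. η_n lies in ℤ[X_n] and has relative norm −1 to ℚ(X_{n-1}), so η_n ∈ RE_n⁻). -/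
/-- `η m = 1 + Σ_{k=1}^{2^m − 1} 2 cos(kπ/2^(m+1))`. -/
noncomputable def η (m : ℕ) : ℝ :=
  1 + ∑ k ∈ Finset.Icc (1 : ℕ) (2 ^ m - 1), 2 * Real.cos ((k : ℝ) * Real.pi / 2 ^ (m + 1))

open Real Finset

namespace Polynomial.Chebyshev

theorem eval_C_mem_adjoin {A : Type*} [CommRing A] (x : A) (n : ℤ) :
    (C A n).eval x ∈ Algebra.adjoin ℤ {x} := by
  rw [← aeval_C (R := ℤ)]
  exact Polynomial.aeval_mem_adjoin_singleton ℤ x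

theorem eval_S_mem_adjoin {A : Type*} [CommRing A] (x : A) (n : ℤ) :
    (S A n).eval x ∈ Algebra.adjoin ℤ {x} := by
  rw [← aeval_S (R := ℤ)]
  exact Polynomial.aeval_mem_adjoin_singleton ℤ x

end Polynomial.Chebyshev

theorem two_mul_cos_nat_mul_mem_adjoin (θ : ℝ) (k : ℕ) :
    2 * cos (k * θ) ∈ Algebra.adjoin ℤ {2 * cos θ} := by
  have h := Polynomial.Chebyshev.eval_C_mem_adjoin (2 * cos θ) k
  rwa [Polynomial.Chebyshev.C_two_mul_real_cos, Int.cast_natCast] at h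

theorem one_add_sum_two_mul_cos_mul_sin_half (θ : ℝ) (M : ℕ) :
    (1 + ∑ k ∈ Icc 1 M, 2 * cos (k * θ)) * sin (θ / 2) = sin ((2 * M + 1) * (θ / 2)) := by
  induction M with
  | zero => simp
  | succ M ih =>
    have h := sin_sub_sin ((2 * (M + 1 : ℝ) + 1) * (θ / 2)) ((2 * M + 1) * (θ / 2))
    rw [sum_Icc_succ_top (by omega), ← add_assoc, add_mul, ih]
    push_cast
    rw [show (2 * (M + 1 : ℝ) + 1) * (θ / 2) - (2 * M + 1) * (θ / 2) = 2 * (θ / 2) by ring,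
      show (2 * (M + 1 : ℝ) + 1) * (θ / 2) + (2 * M + 1) * (θ / 2) = 2 * ((M + 1) * θ) by ring,
      mul_div_cancel_left₀ _ two_ne_zero, mul_div_cancel_left₀ _ two_ne_zero] at h
    linarith

theorem sin_pi_div_two_pow_succ_pos (k : ℕ) : 0 < sin (π / 2 ^ (k + 1)) :=
  sin_pos_of_pos_of_lt_pi (by positivity)
    (div_lt_self pi_pos (one_lt_pow₀ one_lt_two k.succ_ne_zero))

theorem X_eq_two_mul_cos (n : ℕ) : X n = 2 * cos (π / 2 ^ (n + 1)) := by
  rw [X, pow_succ' _ (n + 1), mul_div_mul_left _ _ two_ne_zero]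

theorem η_mul_sin (m : ℕ) : η m * sin (π / 2 ^ (m + 2)) = cos (π / 2 ^ (m + 2)) := by
  have h := one_add_sum_two_mul_cos_mul_sin_half (π / 2 ^ (m + 1)) (2 ^ m - 1)
  have hangle :
      (2 * ((2 ^ m - 1 : ℕ) : ℝ) + 1) * (π / 2 ^ (m + 1) / 2) = π / 2 - π / 2 ^ (m + 2) := by
    rw [Nat.cast_sub Nat.one_le_two_pow]
    push_cast
    field_simp
    ring
  rw [hangle, sin_pi_div_two_sub, div_div, ← pow_succ] at h
  simpa only [η, mul_div_assoc] using h

theorem η_mem_adjoin (m : ℕ) : η m ∈ Algebra.adjoin ℤ {X m} := by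
  rw [η, X_eq_two_mul_cos]
  refine add_mem (one_mem _) (sum_mem fun k _ => ?_)
  rw [mul_div_assoc]
  exact two_mul_cos_nat_mul_mem_adjoin _ k

noncomputable def ηCoeff (m : ℕ) : ℝ := (Polynomial.Chebyshev.S ℝ (2 ^ m - 1)).eval (X m)

theorem ηCoeff_mem_adjoin (m : ℕ) : ηCoeff m ∈ Algebra.adjoin ℤ {X m} :=
  Polynomial.Chebyshev.eval_S_mem_adjoin _ _

theorem ηCoeff_mul_sin (m : ℕ) : ηCoeff m * sin (π / 2 ^ (m + 1)) = 1 := by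
  rw [ηCoeff, X_eq_two_mul_cos, Polynomial.Chebyshev.S_two_mul_real_cos]
  push_cast
  rw [sub_add_cancel, show (2 : ℝ) ^ m * (π / 2 ^ (m + 1)) = π / 2 by rw [pow_succ]; field_simp,
    sin_pi_div_two]

theorem X_succ_mul_ηCoeff_mul_sin (m : ℕ) :
    X (m + 1) * ηCoeff m * sin (π / 2 ^ (m + 2)) = 1 := by
  have h := ηCoeff_mul_sin m
  rw [show π / 2 ^ (m + 1) = 2 * (π / 2 ^ (m + 2)) by rw [pow_succ _ (m + 1)]; field_simp,
    sin_two_mul] at h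
  rw [X_eq_two_mul_cos, ← h]
  ring

theorem η_succ_eq (m : ℕ) : η (m + 1) = η m + X (m + 1) * ηCoeff m := by
  set u := π / 2 ^ (m + 2)
  have hhalf : π / 2 ^ (m + 1 + 2) = u / 2 := by rw [pow_succ _ (m + 2), div_div]
  have hsucc := η_mul_sin (m + 1)
  rw [hhalf] at hsucc
  have hu : sin u ≠ 0 := (sin_pi_div_two_pow_succ_pos (m + 1)).ne'
  have hsin : sin u = 2 * sin (u / 2) * cos (u / 2) := by rw [← sin_two_mul]; ring_nf
  have hcos : cos u = 2 * cos (u / 2) ^ 2 - 1 := by rw [← cos_two_mul]; ring_nf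
  apply mul_right_cancel₀ hu
  linear_combination η (m + 1) * hsin + 2 * cos (u / 2) * hsucc - hcos - η_mul_sin m
    - X_succ_mul_ηCoeff_mul_sin m

theorem η_sq_sub_X_succ_sq_mul_ηCoeff_sq (m : ℕ) :
    η m ^ 2 - X (m + 1) ^ 2 * ηCoeff m ^ 2 = -1 := by
  set u := π / 2 ^ (m + 2)
  have hu : sin u ^ 2 ≠ 0 := pow_ne_zero 2 (sin_pi_div_two_pow_succ_pos (m + 1)).ne'
  apply mul_right_cancel₀ hu
  linear_combination (η m * sin u + cos u) * η_mul_sin m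
    - (X (m + 1) * ηCoeff m * sin u + 1) * X_succ_mul_ηCoeff_mul_sin m + sin_sq_add_cos_sq u

theorem stmt10 (n : ℕ) (hn : 1 ≤ n) :
    η (n - 1) ∈ Algebra.adjoin ℤ ({X (n - 1)} : Set ℝ) ∧
      ∃ q : ℝ, q ∈ Algebra.adjoin ℤ ({X (n - 1)} : Set ℝ) ∧
        η n = η (n - 1) + X n * q ∧
        η (n - 1) ^ 2 - X n ^ 2 * q ^ 2 = -1 := by
  obtain ⟨m, rfl⟩ := Nat.exists_eq_add_of_le' hn
  rw [Nat.add_sub_cancel]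
  exact ⟨η_mem_adjoin m, ηCoeff m, ηCoeff_mem_adjoin m, η_succ_eq m,
    η_sq_sub_X_succ_sq_mul_ηCoeff_sq m⟩
end

section
/- Let n ≥ 1 and let J be the set of odd integers j with 1 ≤ j < 2^n. For each j ∈ J let σ_j : ℤ[X_{n-1}] → ℝ be a ring homomorphism with σ_j(X_{n-1}) = 2*cos(2πj/2^{n+1}), and set x_j = √(2 + 2*cos(2πj/2^{n+1})) (the extension of σ_j to X_n). Let s : J → {1, −1} and let a ∈ ℤ[X_{n-1}] satisfy Σ_{j∈J} (s_j·x_j − σ_j(a))² ≤ Σ_{j∈J} (s_j·x_j − σ_j(a'))² for every a' ∈ ℤ[X_{n-1}]. For j ∈ J set b_j = (x_j + 1)/|s_j·x_j − σ_j(a)| and C_j = log(√(b_j² + 1) + |b_j|). Suppose p, q ∈ ℤ[X_{n-1}] satisfy p² − X_n²·q² = −1, p divides q − 1 in ℤ[X_{n-1}], p divides X_n²·q − 1 in ℤ[X_{n-1}], p·q > 0, and for every j ∈ J the sign s_j equals the sign of σ_j(p)·σ_j(q). Then there exists j ∈ J with |log|σ_j(p) + x_j·σ_j(q)|| ≤ C_j.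 -/
/-!
Write `(2 + χ) q - 1 = p h`. If the bound failed at every `j`, then `h` would approximate every
`s_j x_j` strictly better than `a` does, contradicting the minimality of `a`. At one embedding,
with `P = σ_j p` and `Q = σ_j q`, the Pell equation `P² + 1 = x_j² Q²` gives
`|log |P + x_j Q|| = arsinh |P|`, while `C_j = arsinh b_j`; so failure means `|P| > b_j`, and the
identity `P (s_j x_j - σ_j h) = x_j (s_j P - x_j Q) + 1` with `|s_j P - x_j Q| ≤ 1` yields
`|s_j x_j - σ_j h| < |s_j x_j - σ_j a|`.

This needs `s_j x_j ≠ σ_j a`, i.e. that `2 + c` is not a square in `ℤ[c]` for the root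
`c = σ_j(X_{n-1})` of the `(n-1)`-st iterate of `X² - 2`. For `n ≥ 2` that iterate is Eisenstein
at `2`, hence the minimal polynomial of `c`, and it reduces to `X^(2^(n-1))` modulo `2`, whereas
`g² - X - 2` has `X`-coefficient `1` modulo `2`.
-/

open Real

lemma X_sq {n : ℕ} (hn : 1 ≤ n) : X n ^ 2 = 2 + X (n - 1) := by
  obtain ⟨m, rfl⟩ := Nat.exists_eq_add_of_le' hn
  have hangle : 2 * π / 2 ^ (m + 2) = 2 * (2 * π / 2 ^ (m + 1 + 2)) := by field_simp; ring
  rw [X, X, Nat.add_sub_cancel, hangle, cos_two_mul]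
  ring

section
open Polynomial

-- The roots are `2 cos ((2k + 1) π / 2^(m+1))`; this is the minimal polynomial of `X m`.
noncomputable def sqSubTwoIter : ℕ → ℤ[X]
  | 0 => Polynomial.X
  | m + 1 => sqSubTwoIter m ^ 2 - 2

namespace sqSubTwoIter

@[simp] lemma zero : sqSubTwoIter 0 = Polynomial.X := rfl

lemma succ (m : ℕ) : sqSubTwoIter (m + 1) = sqSubTwoIter m ^ 2 - C 2 := rfl

lemma natDegree_eq (m : ℕ) : (sqSubTwoIter m).natDegree = 2 ^ m := by
  induction m with
  | zero => simp
  | succ m ih => rw [succ, natDegree_sub_C, natDegree_pow, ih, pow_succ, mul_comm]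

lemma monic (m : ℕ) : (sqSubTwoIter m).Monic := by
  induction m with
  | zero => exact monic_X
  | succ m ih =>
    rw [succ]
    refine (ih.pow 2).sub_of_left ?_
    rw [degree_C two_ne_zero, degree_eq_natDegree (ih.pow 2).ne_zero, natDegree_pow, natDegree_eq]
    exact WithBot.coe_pos.2 (by positivity)

lemma map_zmod_two (m : ℕ) :
    (sqSubTwoIter m).map (Int.castRingHom (ZMod 2)) = Polynomial.X ^ 2 ^ m := by
  induction m with
  | zero => simp
  | succ m ih =>
    rw [succ, Polynomial.map_sub, Polynomial.map_pow, ih, Polynomial.map_C,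
      show Int.castRingHom (ZMod 2) 2 = 0 by decide, map_zero, sub_zero, ← pow_mul, ← pow_succ]

lemma eval_zero_eq_two_or_neg_two (m : ℕ) :
    (sqSubTwoIter (m + 1)).eval 0 = 2 ∨ (sqSubTwoIter (m + 1)).eval 0 = -2 := by
  induction m with
  | zero => simp [succ]
  | succ m ih =>
    left
    rw [succ, eval_sub, eval_pow, eval_C]
    rcases ih with h | h <;> rw [h] <;> norm_num

lemma irreducible (m : ℕ) : Irreducible (sqSubTwoIter (m + 1)) := by
  have hP : (Ideal.span ({2} : Set ℤ)).IsPrime :=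
    (Ideal.span_singleton_prime two_ne_zero).2 Int.prime_two
  refine irreducible_of_eisenstein_criterion hP ?_ ?_ ?_ ?_ (monic _).isPrimitive
  · rw [(monic _).leadingCoeff, Ideal.mem_span_singleton]
    norm_num
  · intro i hi
    rw [degree_eq_natDegree (monic _).ne_zero, natDegree_eq, Nat.cast_lt] at hi
    have h := congrArg (coeff · i) (map_zmod_two (m + 1))
    simp only [coeff_map, coeff_X_pow, if_neg hi.ne] at h
    exact Ideal.mem_span_singleton.2 ((ZMod.intCast_zmod_eq_zero_iff_dvd _ 2).1 h)
  · rw [degree_eq_natDegree (monic _).ne_zero, natDegree_eq]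
    exact_mod_cast Nat.two_pow_pos _
  · rw [Ideal.span_singleton_pow, Ideal.mem_span_singleton, coeff_zero_eq_eval_zero]
    rcases eval_zero_eq_two_or_neg_two m with h | h <;> rw [h] <;> norm_num

lemma aeval_two_mul_cos (θ : ℝ) (m : ℕ) :
    aeval (2 * cos θ) (sqSubTwoIter m) = 2 * cos (2 ^ m * θ) := by
  induction m with
  | zero => simp
  | succ m ih =>
    rw [succ, map_sub, map_pow, ih, aeval_C, pow_succ' (2 : ℝ) m, mul_assoc, cos_two_mul]
    simp only [algebraMap_int_eq, eq_intCast, Int.cast_ofNat]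
    ring

lemma aeval_two_mul_cos_odd (m : ℕ) {j : ℕ} (hj : Odd j) :
    aeval (2 * cos (2 * π * j / 2 ^ (m + 2))) (sqSubTwoIter m) = 0 := by
  obtain ⟨k, rfl⟩ := hj
  rw [aeval_two_mul_cos, cos_eq_zero_iff.2 ⟨k, ?_⟩, mul_zero]
  push_cast
  field_simp
  ring

lemma not_dvd_sq_sub_X_sub_two (m : ℕ) (g : ℤ[X]) :
    ¬ sqSubTwoIter (m + 1) ∣ g ^ 2 - Polynomial.X - 2 := by
  -- Modulo 2, `sqSubTwoIter (m + 1)` is `X^(2^(m+1))` and `g²` is a polynomial in `X²`, so the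
  -- coefficients of `X` in `g² - X - 2 = sqSubTwoIter (m + 1) * D` would give `-1 = 0`.
  rintro ⟨D, hD⟩
  have h := congrArg (fun f => (f.map (Int.castRingHom (ZMod 2))).coeff 1) hD
  have h2 : (2 : (ZMod 2)[X]) = 0 := CharTwo.two_eq_zero
  simp only [Polynomial.map_mul, map_zmod_two, Polynomial.map_sub, Polynomial.map_pow,
    Polynomial.map_X, Polynomial.map_ofNat, h2, sub_zero, ← ZMod.expand_card, coeff_sub,
    coeff_X_pow_mul', coeff_X_one, coeff_expand two_pos] at h
  rw [if_neg, if_neg] at h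
  · simp at h
  · norm_num
  · have := Nat.one_lt_two_pow (Nat.succ_ne_zero m); omega

lemma sq_aeval_ne_two_add {S : Type*} [CommRing S] [IsDomain S] [CharZero S] {c : S} {m : ℕ}
    (hc : aeval c (sqSubTwoIter m) = 0) (g : ℤ[X]) : aeval c g ^ 2 ≠ 2 + c := by
  intro hg
  cases m with
  | zero =>
    rw [zero, aeval_X] at hc
    subst hc
    rw [aeval_def, eval₂_at_zero, eq_intCast, add_zero, ← Int.cast_pow, ← Int.cast_ofNat,
      Int.cast_inj] at hg
    have h1 : g.coeff 0 ≤ 1 := by nlinarith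
    have h2 : -1 ≤ g.coeff 0 := by nlinarith
    interval_cases g.coeff 0 <;> simp at hg
  | succ m =>
    have hint : IsIntegral ℤ c := ⟨_, monic _, hc⟩
    have hdvd : minpoly ℤ c ∣ g ^ 2 - Polynomial.X - 2 :=
      minpoly.isIntegrallyClosed_dvd hint (by simp [hg, map_ofNat])
    exact not_dvd_sq_sub_X_sub_two m g <| ((minpoly.irreducible hint).dvd_symm (irreducible m)
      (minpoly.isIntegrallyClosed_dvd hint hc)).trans hdvd

end sqSubTwoIter

lemma Algebra.exists_eq_aeval_of_adjoin_singleton {R A : Type*} [CommRing R] [CommRing A]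
    [Algebra R A] {t : A} {χ : Algebra.adjoin R {t}} (hχ : (χ : A) = t)
    (a : Algebra.adjoin R {t}) : ∃ g : R[X], a = aeval χ g := by
  have ha : (a : A) ∈ (aeval (R := R) t).range := by
    rw [← Algebra.adjoin_singleton_eq_range_aeval]; exact a.2
  obtain ⟨g, hg⟩ := ha
  refine ⟨g, Subtype.ext ?_⟩
  rw [← hg]
  exact (congrArg (aeval · g) hχ.symm).trans (aeval_algHom_apply (Algebra.adjoin R {t}).val χ g)

lemma sq_ne_two_add_of_aeval_eq_zero {A S : Type*} [CommRing A] [CommRing S] [IsDomain S]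
    [CharZero S] {t : A} {χ : Algebra.adjoin ℤ {t}} (hχ : (χ : A) = t)
    (τ : Algebra.adjoin ℤ {t} →+* S) {m : ℕ} (hroot : aeval (τ χ) (sqSubTwoIter m) = 0)
    (a : Algebra.adjoin ℤ {t}) : τ a ^ 2 ≠ 2 + τ χ := by
  obtain ⟨g, rfl⟩ := Algebra.exists_eq_aeval_of_adjoin_singleton hχ a
  have hτ : τ (aeval χ g) = aeval (τ χ) g := (aeval_algHom_apply τ.toIntAlgHom χ g).symm
  exact hτ ▸ sqSubTwoIter.sq_aeval_ne_two_add hroot g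

end

lemma Real.abs_arsinh (x : ℝ) : |arsinh x| = arsinh |x| := by
  rcases le_total 0 x with h | h
  · rw [abs_of_nonneg h, abs_of_nonneg (arsinh_nonneg_iff.2 h)]
  · rw [abs_of_nonpos h, abs_of_nonpos (arsinh_nonpos_iff.2 h), arsinh_neg]

lemma log_sqrt_sq_add_one_add_abs (b : ℝ) : log (√(b ^ 2 + 1) + |b|) = arsinh |b| := by
  rw [arsinh, sq_abs, add_comm, add_comm (b ^ 2)]

lemma abs_log_abs_add_eq_arsinh {P y : ℝ} (h : y ^ 2 = P ^ 2 + 1) :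
    |log (|P + y|)| = arsinh |P| := by
  rw [← abs_arsinh]
  have hy : y = √(1 + P ^ 2) ∨ y = -√(1 + P ^ 2) :=
    sq_eq_sq_iff_eq_or_eq_neg.1 (by rw [sq_sqrt (by positivity)]; linarith)
  rcases hy with rfl | rfl
  · rw [← exp_arsinh, abs_exp, log_exp]
  · rw [show P + -√(1 + P ^ 2) = -(-P + √(1 + (-P) ^ 2)) by rw [neg_sq]; ring, abs_neg,
      ← exp_arsinh, abs_exp, log_exp, arsinh_neg, abs_neg]

lemma abs_sign_mul_sub_le_one {x P Q : ℝ} (hx : 0 ≤ x) (h : P ^ 2 + 1 = x ^ 2 * Q ^ 2)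
    (hPQ : P * Q ≠ 0) : |sign (P * Q) * P - x * Q| ≤ 1 := by
  have hprod : (x * (P * Q)) ^ 2 = P ^ 2 * (P ^ 2 + 1) := by rw [h]; ring
  have hx0 : 0 < x := hx.lt_of_ne (by rintro rfl; nlinarith)
  rw [← sq_le_one_iff_abs_le_one]
  rcases hPQ.lt_or_gt with hneg | hpos
  · have := mul_neg_of_pos_of_neg hx0 hneg
    rw [sign_of_neg hneg]
    nlinarith
  · have := mul_pos hx0 hpos
    rw [sign_of_pos hpos]
    nlinarith

lemma abs_sign_mul_sub_lt_of_arsinh_lt {R : Type*} [CommRing R] (τ : R →+* ℝ) {χ p q h : R}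
    {x r : ℝ} (hx : 0 ≤ x) (hxχ : x ^ 2 = 2 + τ χ) (hpell : p ^ 2 - (2 + χ) * q ^ 2 = -1)
    (hh : (2 + χ) * q - 1 = p * h) (hpq : τ p * τ q ≠ 0) (hr : r ≠ 0)
    (hlt : arsinh ((x + 1) / |r|) < |log (|τ p + x * τ q|)|) :
    |sign (τ p * τ q) * x - τ h| < |r| := by
  set P := τ p
  set Q := τ q
  have hpellτ := congrArg τ hpell
  have hhτ := congrArg τ hh
  simp only [map_sub, map_pow, map_mul, map_add, map_ofNat, map_neg, map_one, ← hxχ]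
    at hpellτ hhτ
  rw [abs_log_abs_add_eq_arsinh (by linear_combination -hpellτ), arsinh_lt_arsinh,
    div_lt_iff₀ (abs_pos.2 hr)] at hlt
  have hunit := abs_sign_mul_sub_le_one hx (by linear_combination hpellτ) hpq
  have hkey : P * (sign (P * Q) * x - τ h) = x * (sign (P * Q) * P - x * Q) + 1 := by
    linear_combination hhτ
  refine lt_of_mul_lt_mul_left ?_ (abs_nonneg P)
  calc |P| * |sign (P * Q) * x - τ h| = |x * (sign (P * Q) * P - x * Q) + 1| := by
        rw [← abs_mul, hkey]
    _ ≤ x * 1 + 1 := by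
        refine (abs_add_le _ _).trans ?_
        rw [abs_mul, abs_of_nonneg hx, abs_one]
        gcongr
    _ < |P| * |r| := by linarith

theorem stmt16_general (n : ℕ) (hn : 1 ≤ n)
    (J : Finset ℕ) (hJ : ∀ j, j ∈ J ↔ Odd j ∧ 1 ≤ j ∧ j < 2 ^ n)
    (σ : ℕ → (Algebra.adjoin ℤ ({X (n - 1)} : Set ℝ) →+* ℝ))
    (χ : Algebra.adjoin ℤ ({X (n - 1)} : Set ℝ)) (hχ : (χ : ℝ) = X (n - 1))
    (hσ : ∀ j ∈ J, σ j χ = 2 * Real.cos (2 * Real.pi * j / 2 ^ (n + 1)))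
    (x : ℕ → ℝ)
    (hx : ∀ j ∈ J, x j = Real.sqrt (2 + 2 * Real.cos (2 * Real.pi * j / 2 ^ (n + 1))))
    (s : ℕ → ℝ) (hs : ∀ j ∈ J, s j = 1 ∨ s j = -1)
    (a : Algebra.adjoin ℤ ({X (n - 1)} : Set ℝ))
    (ha : ∀ a' : Algebra.adjoin ℤ ({X (n - 1)} : Set ℝ),
      ∑ j ∈ J, (s j * x j - σ j a) ^ 2 ≤ ∑ j ∈ J, (s j * x j - σ j a') ^ 2)
    (b C : ℕ → ℝ)
    (hb : ∀ j ∈ J, b j = (x j + 1) / |s j * x j - σ j a|)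
    (hC : ∀ j ∈ J, C j = Real.log (Real.sqrt (b j ^ 2 + 1) + |b j|))
    (p q : Algebra.adjoin ℤ ({X (n - 1)} : Set ℝ))
    (hpell : (p : ℝ) ^ 2 - X n ^ 2 * (q : ℝ) ^ 2 = -1)
    (hdvd2 : p ∣ (2 + χ) * q - 1)
    (hsign : ∀ j ∈ J, s j = Real.sign (σ j p * σ j q)) :
    ∃ j ∈ J, |Real.log (|σ j p + x j * σ j q|)| ≤ C j := by
  by_contra! hfar
  have hpell' : p ^ 2 - (2 + χ) * q ^ 2 = -1 := by
    have h2 : ((2 : Algebra.adjoin ℤ ({X (n - 1)} : Set ℝ)) : ℝ) = 2 :=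
      map_ofNat (Algebra.adjoin ℤ ({X (n - 1)} : Set ℝ)).val 2
    exact Subtype.ext (by push_cast [h2, hχ, ← X_sq hn]; exact hpell)
  obtain ⟨h, hh⟩ := hdvd2
  have hcloser : ∀ j ∈ J, |s j * x j - σ j h| < |s j * x j - σ j a| := by
    intro j hj
    have hs2 : s j ^ 2 = 1 := by rcases hs j hj with h1 | h1 <;> simp [h1]
    have hpq : σ j p * σ j q ≠ 0 := fun h0 => by simp [hsign j hj, h0] at hs2
    have hx0 : 0 ≤ x j := hx j hj ▸ sqrt_nonneg _
    have hxχ : x j ^ 2 = 2 + σ j χ := by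
      rw [hx j hj, hσ j hj, sq_sqrt (by linarith [neg_one_le_cos (2 * π * j / 2 ^ (n + 1))])]
    have hroot : Polynomial.aeval (σ j χ) (sqSubTwoIter (n - 1)) = 0 := by
      have := sqSubTwoIter.aeval_two_mul_cos_odd (n - 1) ((hJ j).1 hj).1
      rwa [show n - 1 + 2 = n + 1 by omega, ← hσ j hj] at this
    have hr : s j * x j - σ j a ≠ 0 := sub_ne_zero.2 fun heq =>
      sq_ne_two_add_of_aeval_eq_zero hχ (σ j) hroot a
        (by rw [← heq, mul_pow, hs2, one_mul, hxχ])
    have hlt := hfar j hj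
    rw [hC j hj, hb j hj, log_sqrt_sq_add_one_add_abs, abs_of_nonneg (by positivity)] at hlt
    rw [hsign j hj] at hr hlt ⊢
    exact abs_sign_mul_sub_lt_of_arsinh_lt (σ j) hx0 hxχ hpell' hh hpq hr hlt
  have hJ1 : 1 ∈ J := (hJ 1).2 ⟨odd_one, le_rfl, Nat.one_lt_two_pow (by omega)⟩
  exact (ha h).not_gt <|
    Finset.sum_lt_sum_of_nonempty ⟨1, hJ1⟩ fun j hj => sq_lt_sq.2 (hcloser j hj)

theorem stmt16 (n : ℕ) (hn : 1 ≤ n)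
    (J : Finset ℕ) (hJ : ∀ j, j ∈ J ↔ Odd j ∧ 1 ≤ j ∧ j < 2 ^ n)
    (σ : ℕ → (Algebra.adjoin ℤ ({X (n - 1)} : Set ℝ) →+* ℝ))
    (χ : Algebra.adjoin ℤ ({X (n - 1)} : Set ℝ)) (hχ : (χ : ℝ) = X (n - 1))
    (hσ : ∀ j ∈ J, σ j χ = 2 * Real.cos (2 * Real.pi * j / 2 ^ (n + 1)))
    (x : ℕ → ℝ)
    (hx : ∀ j ∈ J, x j = Real.sqrt (2 + 2 * Real.cos (2 * Real.pi * j / 2 ^ (n + 1))))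
    (s : ℕ → ℝ) (hs : ∀ j ∈ J, s j = 1 ∨ s j = -1)
    (a : Algebra.adjoin ℤ ({X (n - 1)} : Set ℝ))
    (ha : ∀ a' : Algebra.adjoin ℤ ({X (n - 1)} : Set ℝ),
      ∑ j ∈ J, (s j * x j - σ j a) ^ 2 ≤ ∑ j ∈ J, (s j * x j - σ j a') ^ 2)
    (b C : ℕ → ℝ)
    (hb : ∀ j ∈ J, b j = (x j + 1) / |s j * x j - σ j a|)
    (hC : ∀ j ∈ J, C j = Real.log (Real.sqrt (b j ^ 2 + 1) + |b j|))
    (p q : Algebra.adjoin ℤ ({X (n - 1)} : Set ℝ))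
    (hpell : (p : ℝ) ^ 2 - X n ^ 2 * (q : ℝ) ^ 2 = -1)
    (hdvd1 : p ∣ q - 1)
    (hdvd2 : p ∣ (2 + χ) * q - 1)
    (hpos : (p : ℝ) * (q : ℝ) > 0)
    (hsign : ∀ j ∈ J, s j = Real.sign (σ j p * σ j q)) :
    ∃ j ∈ J, |Real.log (|σ j p + x j * σ j q|)| ≤ C j :=
  stmt16_general n hn J hJ σ χ hχ hσ x hx s hs a ha b C hb hC p q hpell hdvd2 hsign
end
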